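/- ∫_{-∞}^{∞} sin⁴(x)/x⁴ dx = 2π/3. -/

import Mathlib

/-!
The indicator of `[-a, a]` has Fourier transform `2a · sinc (2πaξ)`, so by the convolution theorem
the tent `max (2a - |x|) 0`, which is the self-convolution of that indicator, has Fourier transform
`(2a · sinc (2πaξ))²`. Plancherel's theorem turns `∫ sinc⁴` into the elementary integral
`∫ max (2a - |x|) 0 ^ 2 = 2 (2a)³ / 3`; take `a = 1 / (2π)`.
-/

open MeasureTheory Real FourierTransform Convolution

/-- `φ₀(x) = sin⁴ x / x⁴`, extended by `1` at `x = 0`. -/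
noncomputable def phi0 (x : ℝ) : ℝ := if x = 0 then 1 else (Real.sin x) ^ 4 / x ^ 4

theorem Continuous.integral_norm_sq_fourier {V H : Type*} [NormedAddCommGroup V]
    [InnerProductSpace ℝ V] [FiniteDimensional ℝ V] [MeasurableSpace V] [BorelSpace V]
    [NormedAddCommGroup H] [InnerProductSpace ℂ H] [CompleteSpace H] {f : V → H}
    (hc : Continuous f) (hf : Integrable f) (hFf : Integrable (𝓕 f)) :
    ∫ ξ, ‖𝓕 f ξ‖ ^ 2 = ∫ x, ‖f x‖ ^ 2 := by
  have key : ∫ ξ, Inner.inner ℂ (𝓕 f ξ) (𝓕 f ξ) = ∫ x, Inner.inner ℂ (f x) (𝓕⁻ (𝓕 f) x) := by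
    have := VectorFourier.integral_sesq_fourierIntegral_eq_neg_flip (innerSL ℂ)
      (L := innerₗ V) continuous_fourierChar continuous_inner hf hFf
    rw [flip_innerₗ] at this
    exact this
  rw [hc.fourierInv_fourier_eq hf hFf] at key
  apply Complex.ofRealLI.injective
  simpa [← LinearIsometry.integral_comp_comm, inner_self_eq_norm_sq_to_K] using key

namespace Real

theorem one_add_sq_mul_sinc_sq_le (x : ℝ) : (1 + x ^ 2) * sinc x ^ 2 ≤ 2 := by
  have hsin : x ^ 2 * sinc x ^ 2 = sin x ^ 2 := by
    rcases eq_or_ne x 0 with rfl | hx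
    · simp
    · rw [sinc_of_ne_zero hx]; field_simp
  nlinarith [abs_sinc_le_one x, sin_sq_le_one x, sq_abs (sinc x), abs_nonneg (sinc x)]

theorem integrable_sinc_sq : Integrable fun x => sinc x ^ 2 := by
  refine (integrable_inv_one_add_sq.const_mul 2).mono' (by fun_prop) (.of_forall fun x => ?_)
  rw [norm_pow, Real.norm_eq_abs, sq_abs, ← div_eq_mul_inv, le_div_iff₀ (by positivity), mul_comm]
  exact one_add_sq_mul_sinc_sq_le x

end Real

theorem integral_max_sub_abs_sq {b : ℝ} (hb : 0 ≤ b) :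
    ∫ x, max (b - |x|) 0 ^ 2 = 2 * b ^ 3 / 3 := by
  have hsupp : ∀ y ∈ Set.Ioi 0 \ Set.Ioc 0 b, max (b - y) 0 ^ 2 = 0 := by
    rintro y ⟨hy₀, hyb⟩
    simp only [Set.mem_Ioi, Set.mem_Ioc, not_and, not_le] at hy₀ hyb
    simp [max_eq_right (by linarith [hyb hy₀] : b - y ≤ 0)]
  have hinterval : ∫ y in (0)..b, max (b - y) 0 ^ 2 = ∫ y in (0)..b, (b - y) ^ 2 :=
    intervalIntegral.integral_congr fun y hy => by
      rw [Set.uIcc_of_le hb] at hy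
      rw [max_eq_left (by linarith [hy.2])]
  rw [integral_comp_abs (f := fun y => max (b - y) 0 ^ 2),
    setIntegral_eq_of_subset_of_forall_sdiff_eq_zero measurableSet_Ioi Set.Ioc_subset_Ioi_self
      hsupp, ← intervalIntegral.integral_of_le hb, hinterval,
    intervalIntegral.integral_comp_sub_left (fun y => y ^ 2), integral_pow]
  ring

noncomputable def box (a : ℝ) : ℝ → ℂ := (Set.Icc (-a) a).indicator 1

theorem integrable_box (a : ℝ) : Integrable (box a) :=
  continuous_const.integrableOn_Icc.integrable_indicator measurableSet_Icc

theorem fourier_box {a : ℝ} (ha : 0 ≤ a) (ξ : ℝ) :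
    𝓕 (box a) ξ = 2 * a * sinc (2 * π * a * ξ) := by
  have hint : 𝓕 (box a) ξ = ∫ v in -a..a, Complex.exp (↑(-2 * π * ξ * v) * Complex.I) := by
    rw [fourier_real_eq_integral_exp_smul, box, intervalIntegral.integral_of_le (by linarith),
      ← integral_Icc_eq_integral_Ioc, ← integral_indicator measurableSet_Icc]
    congr 1 with v
    by_cases hv : v ∈ Set.Icc (-a) a <;> simp [hv, mul_right_comm _ v ξ]
  rw [hint]
  rcases eq_or_ne ξ 0 with rfl | hξ
  · simp [two_mul]
  have hc : -2 * π * ξ ≠ 0 := by simp [pi_ne_zero, hξ]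
  rw [intervalIntegral.integral_comp_mul_left (fun x : ℝ => Complex.exp (x * Complex.I)) hc,
    mul_neg, integral_exp_mul_I_eq_sinc,
    show -2 * π * ξ * a = -(2 * π * a * ξ) by ring, sinc_neg, Complex.real_smul]
  have : (ξ : ℂ) ≠ 0 := by exact_mod_cast hξ
  push_cast
  field_simp

theorem box_convolution_box (a x : ℝ) :
    (box a ⋆[ContinuousLinearMap.mul ℂ ℂ] box a) x = max (2 * a - |x|) 0 := by
  have hshift : ∀ t, box a (x - t) = (Set.Icc (x - a) (x + a)).indicator 1 t := by
    intro t
    have : x - t ∈ Set.Icc (-a) a ↔ t ∈ Set.Icc (x - a) (x + a) := by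
      simp only [Set.mem_Icc]; constructor <;> rintro ⟨h₁, h₂⟩ <;> constructor <;> linarith
    simp only [box, Set.indicator_apply, this, Pi.one_apply]
  have hmul : ∀ t, box a t * box a (x - t) =
      (Set.Icc (-a ⊔ (x - a)) (a ⊓ (x + a))).indicator 1 t := by
    intro t
    rw [← Set.Icc_inter_Icc, Set.inter_indicator_one, Pi.mul_apply, hshift, box]
  simp only [convolution, ContinuousLinearMap.mul_apply', hmul]
  refine (integral_indicator_const (1 : ℂ) measurableSet_Icc).trans ?_
  rw [volume_real_Icc, Complex.real_smul, mul_one]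
  congr 2
  rcases le_total 0 x with hx | hx
  · rw [abs_of_nonneg hx, max_eq_right (by linarith), min_eq_left (by linarith)]; ring
  · rw [abs_of_nonpos hx, max_eq_left (by linarith), min_eq_right (by linarith)]; ring

theorem fourier_box_convolution_box {a : ℝ} (ha : 0 ≤ a) (ξ : ℝ) :
    𝓕 (box a ⋆[ContinuousLinearMap.mul ℂ ℂ] box a) ξ =
      ((2 * a * sinc (2 * π * a * ξ)) ^ 2 : ℝ) := by
  rw [fourier_mul_convolution_eq (integrable_box a) (integrable_box a), fourier_box ha]
  push_cast
  ring

theorem integral_mul_sinc_mul_pow_four {a : ℝ} (ha : 0 < a) :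
    ∫ ξ, (2 * a * sinc (2 * π * a * ξ)) ^ 4 = 2 * (2 * a) ^ 3 / 3 := by
  set g := box a ⋆[ContinuousLinearMap.mul ℂ ℂ] box a
  have hg : g = fun x => ((max (2 * a - |x|) 0 : ℝ) : ℂ) := funext (box_convolution_box a)
  have hFg : 𝓕 g = fun ξ => (((2 * a * sinc (2 * π * a * ξ)) ^ 2 : ℝ) : ℂ) :=
    funext (fourier_box_convolution_box ha.le)
  have hcont : Continuous g := by rw [hg]; fun_prop
  have hint : Integrable g := (integrable_box a).integrable_convolution _ (integrable_box a)
  have hsq : Integrable fun ξ => (2 * a * sinc (2 * π * a * ξ)) ^ 2 := by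
    convert (integrable_sinc_sq.comp_mul_left' (by positivity : 2 * π * a ≠ 0)).const_mul
      ((2 * a) ^ 2) using 2 with ξ
    ring
  have hFint : Integrable (𝓕 g) := hFg ▸ hsq.ofReal
  have plancherel := hcont.integral_norm_sq_fourier hint hFint
  rw [hFg] at plancherel
  simp only [hg, Complex.norm_real, Real.norm_eq_abs, sq_abs] at plancherel
  rw [← integral_max_sub_abs_sq (by positivity : 0 ≤ 2 * a), ← plancherel]
  congr 1 with ξ
  ring

theorem phi0_eq_sinc_pow_four (x : ℝ) : phi0 x = sinc x ^ 4 := by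
  rcases eq_or_ne x 0 with rfl | hx
  · simp [phi0]
  · rw [phi0, if_neg hx, sinc_of_ne_zero hx, div_pow]

theorem stmt2 : (∫ x : ℝ, phi0 x) = 2 * π / 3 := by
  have h := integral_mul_sinc_mul_pow_four (inv_pos.2 (mul_pos two_pos pi_pos))
  have hπ : π ≠ 0 := pi_ne_zero
  simp only [mul_inv_cancel₀ (mul_ne_zero two_ne_zero hπ), one_mul, mul_pow,
    integral_const_mul] at h
  simp_rw [phi0_eq_sinc_pow_four]
  field_simp at h ⊢
  linarith
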